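/- Let R > 0 and define the cube-to-sphere map s̃₀ : ℝ³ → ℝ³ by s̃₀(x,y,z) = R·( x·√(1 − y²/2 − z²/2 + y²z²/3), y·√(1 − z²/2 − x²/2 + z²x²/3), z·√(1 − x²/2 − y²/2 + x²y²/3) ). Then for every point (x,y,z) with |x| ≤ 1, |y| ≤ 1, |z| ≤ 1 and max(|x|,|y|,|z|) = 1 (i.e. every point on the surface of the cube [−1,1]³), the Euclidean norm of s̃₀(x,y,z) equals R; that is, s̃₀ maps the surface of the cube onto the sphere of radius R. -/
import Mathlib


/-- The cube-to-sphere map `s̃₀` sends every point on the surface of the cube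
`[-1,1]³` to a point of Euclidean norm `R`, i.e. onto the sphere of radius `R`. -/
theorem cube_to_sphere_norm (R : ℝ) (hR : 0 < R) (x y z : ℝ)
    (hx : |x| ≤ 1) (hy : |y| ≤ 1) (hz : |z| ≤ 1)
    (hmax : max |x| (max |y| |z|) = 1) :
    Real.sqrt ((R * (x * Real.sqrt (1 - y ^ 2 / 2 - z ^ 2 / 2 + y ^ 2 * z ^ 2 / 3))) ^ 2
      + (R * (y * Real.sqrt (1 - z ^ 2 / 2 - x ^ 2 / 2 + z ^ 2 * x ^ 2 / 3))) ^ 2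
      + (R * (z * Real.sqrt (1 - x ^ 2 / 2 - y ^ 2 / 2 + x ^ 2 * y ^ 2 / 3))) ^ 2) = R := by
  have hx2 : x ^ 2 ≤ 1 := by nlinarith [sq_abs x, abs_nonneg x]
  have hy2 : y ^ 2 ≤ 1 := by nlinarith [sq_abs y, abs_nonneg y]
  have hz2 : z ^ 2 ≤ 1 := by nlinarith [sq_abs z, abs_nonneg z]
  have hA : (0:ℝ) ≤ 1 - y ^ 2 / 2 - z ^ 2 / 2 + y ^ 2 * z ^ 2 / 3 := by
    nlinarith [sq_nonneg y, sq_nonneg z, sq_nonneg (y*z)]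
  have hB : (0:ℝ) ≤ 1 - z ^ 2 / 2 - x ^ 2 / 2 + z ^ 2 * x ^ 2 / 3 := by
    nlinarith [sq_nonneg z, sq_nonneg x, sq_nonneg (z*x)]
  have hC : (0:ℝ) ≤ 1 - x ^ 2 / 2 - y ^ 2 / 2 + x ^ 2 * y ^ 2 / 3 := by
    nlinarith [sq_nonneg x, sq_nonneg y, sq_nonneg (x*y)]
  have hone : x ^ 2 = 1 ∨ y ^ 2 = 1 ∨ z ^ 2 = 1 := by
    rcases max_cases |x| (max |y| |z|) with ⟨h1, _⟩ | ⟨h1, _⟩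
    · left; rw [← sq_abs, h1.symm.trans hmax]; norm_num
    · rcases max_cases |y| |z| with ⟨h2, _⟩ | ⟨h2, _⟩
      · right; left; rw [← sq_abs, h2.symm.trans (h1.symm.trans hmax)]; norm_num
      · right; right; rw [← sq_abs, h2.symm.trans (h1.symm.trans hmax)]; norm_num
  have key : x ^ 2 * (1 - y ^ 2 / 2 - z ^ 2 / 2 + y ^ 2 * z ^ 2 / 3)
      + y ^ 2 * (1 - z ^ 2 / 2 - x ^ 2 / 2 + z ^ 2 * x ^ 2 / 3)
      + z ^ 2 * (1 - x ^ 2 / 2 - y ^ 2 / 2 + x ^ 2 * y ^ 2 / 3) = 1 := by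
    rcases hone with h | h | h <;> nlinarith [h]
  have expand : (R * (x * Real.sqrt (1 - y ^ 2 / 2 - z ^ 2 / 2 + y ^ 2 * z ^ 2 / 3))) ^ 2
      + (R * (y * Real.sqrt (1 - z ^ 2 / 2 - x ^ 2 / 2 + z ^ 2 * x ^ 2 / 3))) ^ 2
      + (R * (z * Real.sqrt (1 - x ^ 2 / 2 - y ^ 2 / 2 + x ^ 2 * y ^ 2 / 3))) ^ 2 = R ^ 2 := by
    rw [mul_pow, mul_pow, mul_pow, mul_pow, mul_pow, mul_pow,
      Real.sq_sqrt hA, Real.sq_sqrt hB, Real.sq_sqrt hC]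
    linear_combination R ^ 2 * key
  rw [expand, Real.sqrt_sq hR.le]
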